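/- arXiv:2102.10664 — 3 statements merged into one kernel-verified Lean document; each statement's English description precedes it below -/
import Mathlib

section
/- The vector fields X(τ₁) and X(τ₂), where X(τ) = τ(t)∂_t + (τ'(t)/2)(x∂_x + y∂_y) − τ'(t)u∂_u + (τ''(t)/4)(x²+σy²)∂_s + [(τ'''(t)/(4δ))(x²+σy²) − τ'(t)φ]∂_φ, satisfy [X(τ₁), X(τ₂)] = X(τ₁τ₂' − τ₂τ₁'). -/
noncomputable section

/-- Points of ℝ⁶ with coordinates (t,x,y,u,s,φ) indexed 0,…,5. -/
abbrev Pt : Type := Fin 6 → ℝ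

/-- Lie bracket of vector fields on ℝ⁶ (coordinate formula
`[X,Z] p = DZ(p)·X(p) − DX(p)·Z(p)`, equivalent to `[X,Z]f = X(Zf) − Z(Xf)`). -/
def bracket (X Z : Pt → Pt) : Pt → Pt :=
  fun p => fderiv ℝ Z p (X p) - fderiv ℝ X p (Z p)

/-- X(τ) = τ∂_t + (τ'/2)(x∂ₓ + y∂_y) − τ'u∂ᵤ + (τ''/4)(x²+σy²)∂ₛ
  + [(τ'''/(4δ))(x²+σy²) − τ'φ]∂_φ. -/
def Xf (σ δ : ℝ) (τ : ℝ → ℝ) : Pt → Pt := fun p =>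
  ![τ (p 0),
    deriv τ (p 0) / 2 * p 1,
    deriv τ (p 0) / 2 * p 2,
    -(deriv τ (p 0) * p 3),
    deriv (deriv τ) (p 0) / 4 * (p 1 ^ 2 + σ * p 2 ^ 2),
    deriv (deriv (deriv τ)) (p 0) / (4 * δ) * (p 1 ^ 2 + σ * p 2 ^ 2)
      - deriv τ (p 0) * p 5]

open ContinuousLinearMap in
lemma fderiv_Xf (σ δ : ℝ) (τ : ℝ → ℝ) (hτ : ContDiff ℝ (⊤ : ℕ∞) τ) (p v : Pt) :
    fderiv ℝ (Xf σ δ τ) p v =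
    ![deriv τ (p 0) * v 0,
      deriv (deriv τ) (p 0) / 2 * v 0 * p 1 + deriv τ (p 0) / 2 * v 1,
      deriv (deriv τ) (p 0) / 2 * v 0 * p 2 + deriv τ (p 0) / 2 * v 2,
      -(deriv (deriv τ) (p 0) * v 0 * p 3 + deriv τ (p 0) * v 3),
      deriv (deriv (deriv τ)) (p 0) / 4 * v 0 * (p 1 ^ 2 + σ * p 2 ^ 2)
        + deriv (deriv τ) (p 0) / 4 * (2 * p 1 * v 1 + σ * (2 * p 2 * v 2)),
      deriv (deriv (deriv (deriv τ))) (p 0) / (4 * δ) * v 0 * (p 1 ^ 2 + σ * p 2 ^ 2)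
        + deriv (deriv (deriv τ)) (p 0) / (4 * δ) * (2 * p 1 * v 1 + σ * (2 * p 2 * v 2))
        - (deriv (deriv τ) (p 0) * v 0 * p 5 + deriv τ (p 0) * v 5)] := by
  have c0 : ContDiff ℝ ((⊤ : ℕ∞) : WithTop ℕ∞) τ := hτ.of_le (by simp)
  have c1 : ContDiff ℝ ((⊤ : ℕ∞) : WithTop ℕ∞) (deriv τ) := (contDiff_infty_iff_deriv.mp c0).2
  have c2 : ContDiff ℝ ((⊤ : ℕ∞) : WithTop ℕ∞) (deriv (deriv τ)) := (contDiff_infty_iff_deriv.mp c1).2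
  have c3 : ContDiff ℝ ((⊤ : ℕ∞) : WithTop ℕ∞) (deriv (deriv (deriv τ))) := (contDiff_infty_iff_deriv.mp c2).2
  have d0 : DifferentiableAt ℝ τ (p 0) := (c0.differentiable (by norm_num)) _
  have d1 : DifferentiableAt ℝ (deriv τ) (p 0) := (c1.differentiable (by norm_num)) _
  have d2 : DifferentiableAt ℝ (deriv (deriv τ)) (p 0) := (c2.differentiable (by norm_num)) _
  have d3 : DifferentiableAt ℝ (deriv (deriv (deriv τ))) (p 0) := (c3.differentiable (by norm_num)) _
  have hp : ∀ i : Fin 6, HasFDerivAt (fun q : Pt => q i) (proj i : Pt →L[ℝ] ℝ) p :=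
    fun i => hasFDerivAt_apply i p
  have h0 : HasFDerivAt (fun q : Pt => τ (q 0)) _ p :=
    d0.hasDerivAt.comp_hasFDerivAt p (hp 0)
  have h1 : HasFDerivAt (fun q : Pt => deriv τ (q 0) / 2 * q 1) _ p :=
    ((d1.hasDerivAt.div_const (2 : ℝ)).comp_hasFDerivAt p (hp 0) :).fun_mul (hp 1)
  have h2 : HasFDerivAt (fun q : Pt => deriv τ (q 0) / 2 * q 2) _ p :=
    ((d1.hasDerivAt.div_const (2 : ℝ)).comp_hasFDerivAt p (hp 0) :).fun_mul (hp 2)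
  have h3 : HasFDerivAt (fun q : Pt => -(deriv τ (q 0) * q 3)) _ p :=
    ((d1.hasDerivAt.comp_hasFDerivAt p (hp 0) :).fun_mul (hp 3)).fun_neg
  have hq : HasFDerivAt (fun q : Pt => q 1 * q 1 + σ * (q 2 * q 2)) _ p :=
    ((hp 1).fun_mul (hp 1)).fun_add (((hp 2).fun_mul (hp 2)).const_mul σ)
  have h4 : HasFDerivAt
      (fun q : Pt => deriv (deriv τ) (q 0) / 4 * (q 1 * q 1 + σ * (q 2 * q 2))) _ p :=
    ((d2.hasDerivAt.div_const (4 : ℝ)).comp_hasFDerivAt p (hp 0) :).fun_mul hq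
  have h5 : HasFDerivAt
      (fun q : Pt => deriv (deriv (deriv τ)) (q 0) / (4 * δ) * (q 1 * q 1 + σ * (q 2 * q 2))
        - deriv τ (q 0) * q 5) _ p :=
    (((d3.hasDerivAt.div_const (4 * δ)).comp_hasFDerivAt p (hp 0) :).fun_mul hq).fun_sub
      ((d1.hasDerivAt.comp_hasFDerivAt p (hp 0) :).fun_mul (hp 5))
  have hXf : Xf σ δ τ = fun q i => Xf σ δ τ q i := rfl
  have hdiff : ∀ i : Fin 6, DifferentiableAt ℝ (fun q : Pt => Xf σ δ τ q i) p := by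
    intro i
    fin_cases i <;> simp only [Xf, Matrix.cons_val_zero, Matrix.cons_val_one, Matrix.head_cons,
      Matrix.cons_val_two, Matrix.tail_cons, Matrix.cons_val_three, Matrix.cons_val_four,
      Matrix.cons_val', Matrix.empty_val', Matrix.cons_val_fin_one, pow_two]
    exacts [h0.differentiableAt, h1.differentiableAt, h2.differentiableAt,
      h3.differentiableAt, h4.differentiableAt, h5.differentiableAt]
  rw [hXf, fderiv_pi hdiff]
  funext i
  fin_cases i
  · show fderiv ℝ (fun q : Pt => τ (q 0)) p v = deriv τ (p 0) * v 0
    rw [h0.fderiv]; simp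
  · show fderiv ℝ (fun q : Pt => deriv τ (q 0) / 2 * q 1) p v
      = deriv (deriv τ) (p 0) / 2 * v 0 * p 1 + deriv τ (p 0) / 2 * v 1
    rw [h1.fderiv]; simp; ring
  · show fderiv ℝ (fun q : Pt => deriv τ (q 0) / 2 * q 2) p v
      = deriv (deriv τ) (p 0) / 2 * v 0 * p 2 + deriv τ (p 0) / 2 * v 2
    rw [h2.fderiv]; simp; ring
  · show fderiv ℝ (fun q : Pt => -(deriv τ (q 0) * q 3)) p v
      = -(deriv (deriv τ) (p 0) * v 0 * p 3 + deriv τ (p 0) * v 3)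
    rw [h3.fderiv]; simp; ring
  · show fderiv ℝ (fun q : Pt =>
        deriv (deriv τ) (q 0) / 4 * (q 1 ^ 2 + σ * q 2 ^ 2)) p v
      = deriv (deriv (deriv τ)) (p 0) / 4 * v 0 * (p 1 ^ 2 + σ * p 2 ^ 2)
        + deriv (deriv τ) (p 0) / 4 * (2 * p 1 * v 1 + σ * (2 * p 2 * v 2))
    rw [show (fun q : Pt => deriv (deriv τ) (q 0) / 4 * (q 1 ^ 2 + σ * q 2 ^ 2))
        = (fun q : Pt => deriv (deriv τ) (q 0) / 4 * (q 1 * q 1 + σ * (q 2 * q 2))) by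
      funext q; ring]
    rw [h4.fderiv]; simp; ring
  · show fderiv ℝ (fun q : Pt =>
        deriv (deriv (deriv τ)) (q 0) / (4 * δ) * (q 1 ^ 2 + σ * q 2 ^ 2)
          - deriv τ (q 0) * q 5) p v
      = deriv (deriv (deriv (deriv τ))) (p 0) / (4 * δ) * v 0 * (p 1 ^ 2 + σ * p 2 ^ 2)
        + deriv (deriv (deriv τ)) (p 0) / (4 * δ) * (2 * p 1 * v 1 + σ * (2 * p 2 * v 2))
        - (deriv (deriv τ) (p 0) * v 0 * p 5 + deriv τ (p 0) * v 5)
    rw [show (fun q : Pt => deriv (deriv (deriv τ)) (q 0) / (4 * δ) * (q 1 ^ 2 + σ * q 2 ^ 2)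
          - deriv τ (q 0) * q 5)
        = (fun q : Pt => deriv (deriv (deriv τ)) (q 0) / (4 * δ) * (q 1 * q 1 + σ * (q 2 * q 2))
          - deriv τ (q 0) * q 5) by
      funext q; ring]
    rw [h5.fderiv]; simp; ring

/-- [X(τ₁), X(τ₂)] = X(τ₁τ₂' − τ₂τ₁'). -/
theorem stmt_5 (σ δ : ℝ) (hδ : δ ≠ 0) (τ₁ τ₂ : ℝ → ℝ)
    (hτ₁ : ContDiff ℝ (⊤ : ℕ∞) τ₁) (hτ₂ : ContDiff ℝ (⊤ : ℕ∞) τ₂) :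
    bracket (Xf σ δ τ₁) (Xf σ δ τ₂)
      = Xf σ δ (fun t => τ₁ t * deriv τ₂ t - τ₂ t * deriv τ₁ t) := by
  have s1 : ContDiff ℝ ((⊤ : ℕ∞) : WithTop ℕ∞) τ₁ := hτ₁.of_le (by simp)
  have s2 : ContDiff ℝ ((⊤ : ℕ∞) : WithTop ℕ∞) τ₂ := hτ₂.of_le (by simp)
  have s1' := (contDiff_infty_iff_deriv.mp s1).2
  have s2' := (contDiff_infty_iff_deriv.mp s2).2
  have s1'' := (contDiff_infty_iff_deriv.mp s1').2
  have s2'' := (contDiff_infty_iff_deriv.mp s2').2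
  have s1''' := (contDiff_infty_iff_deriv.mp s1'').2
  have s2''' := (contDiff_infty_iff_deriv.mp s2'').2
  have D10 : Differentiable ℝ τ₁ := s1.differentiable (by norm_num)
  have D20 : Differentiable ℝ τ₂ := s2.differentiable (by norm_num)
  have D11 : Differentiable ℝ (deriv τ₁) := s1'.differentiable (by norm_num)
  have D21 : Differentiable ℝ (deriv τ₂) := s2'.differentiable (by norm_num)
  have D12 : Differentiable ℝ (deriv (deriv τ₁)) := s1''.differentiable (by norm_num)
  have D22 : Differentiable ℝ (deriv (deriv τ₂)) := s2''.differentiable (by norm_num)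
  have D13 : Differentiable ℝ (deriv (deriv (deriv τ₁))) := s1'''.differentiable (by norm_num)
  have D23 : Differentiable ℝ (deriv (deriv (deriv τ₂))) := s2'''.differentiable (by norm_num)
  have E1 : deriv (fun t => τ₁ t * deriv τ₂ t - τ₂ t * deriv τ₁ t)
      = fun t => τ₁ t * deriv (deriv τ₂) t - τ₂ t * deriv (deriv τ₁) t := by
    funext t
    rw [deriv_fun_sub ((D10 t).fun_mul (D21 t)) ((D20 t).fun_mul (D11 t)),
      deriv_fun_mul (D10 t) (D21 t), deriv_fun_mul (D20 t) (D11 t)]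
    ring
  have E2 : deriv (deriv (fun t => τ₁ t * deriv τ₂ t - τ₂ t * deriv τ₁ t))
      = fun t => deriv τ₁ t * deriv (deriv τ₂) t + τ₁ t * deriv (deriv (deriv τ₂)) t
          - (deriv τ₂ t * deriv (deriv τ₁) t + τ₂ t * deriv (deriv (deriv τ₁)) t) := by
    rw [E1]
    funext t
    rw [deriv_fun_sub ((D10 t).fun_mul (D22 t)) ((D20 t).fun_mul (D12 t)),
      deriv_fun_mul (D10 t) (D22 t), deriv_fun_mul (D20 t) (D12 t)]
  have E3 : deriv (deriv (deriv (fun t => τ₁ t * deriv τ₂ t - τ₂ t * deriv τ₁ t)))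
      = fun t => deriv (deriv τ₁) t * deriv (deriv τ₂) t
          + 2 * deriv τ₁ t * deriv (deriv (deriv τ₂)) t
          + τ₁ t * deriv (deriv (deriv (deriv τ₂))) t
          - (deriv (deriv τ₂) t * deriv (deriv τ₁) t
            + 2 * deriv τ₂ t * deriv (deriv (deriv τ₁)) t
            + τ₂ t * deriv (deriv (deriv (deriv τ₁))) t) := by
    rw [E2]
    funext t
    rw [deriv_fun_sub (((D11 t).fun_mul (D22 t)).fun_add ((D10 t).fun_mul (D23 t)))
        (((D21 t).fun_mul (D12 t)).fun_add ((D20 t).fun_mul (D13 t))),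
      deriv_fun_add ((D11 t).fun_mul (D22 t)) ((D10 t).fun_mul (D23 t)),
      deriv_fun_add ((D21 t).fun_mul (D12 t)) ((D20 t).fun_mul (D13 t)),
      deriv_fun_mul (D11 t) (D22 t), deriv_fun_mul (D10 t) (D23 t),
      deriv_fun_mul (D21 t) (D12 t), deriv_fun_mul (D20 t) (D13 t)]
    ring
  funext p
  show fderiv ℝ (Xf σ δ τ₂) p (Xf σ δ τ₁ p) - fderiv ℝ (Xf σ δ τ₁) p (Xf σ δ τ₂ p)
    = Xf σ δ (fun t => τ₁ t * deriv τ₂ t - τ₂ t * deriv τ₁ t) p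
  rw [fderiv_Xf σ δ τ₂ hτ₂, fderiv_Xf σ δ τ₁ hτ₁]
  show _ = Xf σ δ (fun t => τ₁ t * deriv τ₂ t - τ₂ t * deriv τ₁ t) p
  unfold Xf
  rw [E3, E2, E1]
  funext i
  fin_cases i
  · show deriv τ₂ (p 0) * τ₁ (p 0)
        - (deriv τ₁ (p 0) * τ₂ (p 0))
      = (τ₁ (p 0) * deriv τ₂ (p 0) - τ₂ (p 0) * deriv τ₁ (p 0))
    ring
  · show deriv (deriv τ₂) (p 0) / 2 * τ₁ (p 0) * p 1 + deriv τ₂ (p 0) / 2 * (deriv τ₁ (p 0) / 2 * p 1)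
        - (deriv (deriv τ₁) (p 0) / 2 * τ₂ (p 0) * p 1 + deriv τ₁ (p 0) / 2 * (deriv τ₂ (p 0) / 2 * p 1))
      = (τ₁ (p 0) * deriv (deriv τ₂) (p 0) - τ₂ (p 0) * deriv (deriv τ₁) (p 0)) / 2 * p 1
    ring
  · show deriv (deriv τ₂) (p 0) / 2 * τ₁ (p 0) * p 2 + deriv τ₂ (p 0) / 2 * (deriv τ₁ (p 0) / 2 * p 2)
        - (deriv (deriv τ₁) (p 0) / 2 * τ₂ (p 0) * p 2 + deriv τ₁ (p 0) / 2 * (deriv τ₂ (p 0) / 2 * p 2))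
      = (τ₁ (p 0) * deriv (deriv τ₂) (p 0) - τ₂ (p 0) * deriv (deriv τ₁) (p 0)) / 2 * p 2
    ring
  · show -(deriv (deriv τ₂) (p 0) * τ₁ (p 0) * p 3 + deriv τ₂ (p 0) * -(deriv τ₁ (p 0) * p 3))
        - (-(deriv (deriv τ₁) (p 0) * τ₂ (p 0) * p 3 + deriv τ₁ (p 0) * -(deriv τ₂ (p 0) * p 3)))
      = -((τ₁ (p 0) * deriv (deriv τ₂) (p 0) - τ₂ (p 0) * deriv (deriv τ₁) (p 0)) * p 3)
    ring
  · show deriv (deriv (deriv τ₂)) (p 0) / 4 * τ₁ (p 0) * (p 1 ^ 2 + σ * p 2 ^ 2) + deriv (deriv τ₂) (p 0) / 4 * (2 * p 1 * (deriv τ₁ (p 0) / 2 * p 1) + σ * (2 * p 2 * (deriv τ₁ (p 0) / 2 * p 2)))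
        - (deriv (deriv (deriv τ₁)) (p 0) / 4 * τ₂ (p 0) * (p 1 ^ 2 + σ * p 2 ^ 2) + deriv (deriv τ₁) (p 0) / 4 * (2 * p 1 * (deriv τ₂ (p 0) / 2 * p 1) + σ * (2 * p 2 * (deriv τ₂ (p 0) / 2 * p 2))))
      = (deriv τ₁ (p 0) * deriv (deriv τ₂) (p 0) + τ₁ (p 0) * deriv (deriv (deriv τ₂)) (p 0) - (deriv τ₂ (p 0) * deriv (deriv τ₁) (p 0) + τ₂ (p 0) * deriv (deriv (deriv τ₁)) (p 0))) / 4 * (p 1 ^ 2 + σ * p 2 ^ 2)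
    ring
  · show deriv (deriv (deriv (deriv τ₂))) (p 0) / (4 * δ) * τ₁ (p 0) * (p 1 ^ 2 + σ * p 2 ^ 2) + deriv (deriv (deriv τ₂)) (p 0) / (4 * δ) * (2 * p 1 * (deriv τ₁ (p 0) / 2 * p 1) + σ * (2 * p 2 * (deriv τ₁ (p 0) / 2 * p 2))) - (deriv (deriv τ₂) (p 0) * τ₁ (p 0) * p 5 + deriv τ₂ (p 0) * (deriv (deriv (deriv τ₁)) (p 0) / (4 * δ) * (p 1 ^ 2 + σ * p 2 ^ 2) - deriv τ₁ (p 0) * p 5))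
        - (deriv (deriv (deriv (deriv τ₁))) (p 0) / (4 * δ) * τ₂ (p 0) * (p 1 ^ 2 + σ * p 2 ^ 2) + deriv (deriv (deriv τ₁)) (p 0) / (4 * δ) * (2 * p 1 * (deriv τ₂ (p 0) / 2 * p 1) + σ * (2 * p 2 * (deriv τ₂ (p 0) / 2 * p 2))) - (deriv (deriv τ₁) (p 0) * τ₂ (p 0) * p 5 + deriv τ₁ (p 0) * (deriv (deriv (deriv τ₂)) (p 0) / (4 * δ) * (p 1 ^ 2 + σ * p 2 ^ 2) - deriv τ₂ (p 0) * p 5)))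
      = (deriv (deriv τ₁) (p 0) * deriv (deriv τ₂) (p 0) + 2 * deriv τ₁ (p 0) * deriv (deriv (deriv τ₂)) (p 0) + τ₁ (p 0) * deriv (deriv (deriv (deriv τ₂))) (p 0) - (deriv (deriv τ₂) (p 0) * deriv (deriv τ₁) (p 0) + 2 * deriv τ₂ (p 0) * deriv (deriv (deriv τ₁)) (p 0) + τ₂ (p 0) * deriv (deriv (deriv (deriv τ₁))) (p 0))) / (4 * δ) * (p 1 ^ 2 + σ * p 2 ^ 2) - (τ₁ (p 0) * deriv (deriv τ₂) (p 0) - τ₂ (p 0) * deriv (deriv τ₁) (p 0)) * p 5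
    ring
end
end

section
/- With X(τ) as above and W(m) = m(t)∂_s + (1/δ)m'(t)∂_φ, one has [X(τ), W(m)] = W(τ m'). -/
noncomputable section

/-- W(m) = m(t)∂ₛ + (1/δ) m'(t)∂_φ. -/
def Wf (δ : ℝ) (m : ℝ → ℝ) : Pt → Pt := fun p =>
  ![0, 0, 0, 0, m (p 0), deriv m (p 0) / δ]

set_option maxHeartbeats 1000000 in
abbrev P (i : Fin 6) : Pt →L[ℝ] ℝ := ContinuousLinearMap.proj i

@[simp] lemma cons_val_five {α : Type*} (x : α) (u : Fin 5 → α) :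
    Matrix.vecCons x u 5 = u 4 := rfl

lemma hcomp0 {f : ℝ → ℝ} (hf : ContDiff ℝ (⊤:ℕ∞) f) (p : Pt) :
    HasFDerivAt (fun x : Pt => f (x 0)) (deriv f (p 0) • P 0) p :=
  ((hf.differentiable (by simp) _).hasDerivAt).comp_hasFDerivAt p (hasFDerivAt_apply 0 p)

set_option maxHeartbeats 1000000 in
/-- [X(τ), W(m)] = W(τ m'). -/
theorem stmt_6 (σ δ : ℝ) (hδ : δ ≠ 0) (τ m : ℝ → ℝ)
    (hτ : ContDiff ℝ (⊤ : ℕ∞) τ) (hm : ContDiff ℝ (⊤ : ℕ∞) m) :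
    bracket (Xf σ δ τ) (Wf δ m) = Wf δ (fun t => τ t * deriv m t) := by
  have hm' : ContDiff ℝ (⊤:ℕ∞) m := hm.of_le (by simp)
  have hτ' : ContDiff ℝ (⊤:ℕ∞) τ := hτ.of_le (by simp)
  have hm1 : ContDiff ℝ (⊤:ℕ∞) (deriv m) := (contDiff_infty_iff_deriv.mp hm').2
  have hτ1 : ContDiff ℝ (⊤:ℕ∞) (deriv τ) := (contDiff_infty_iff_deriv.mp hτ').2
  have hτ2 : ContDiff ℝ (⊤:ℕ∞) (deriv (deriv τ)) := (contDiff_infty_iff_deriv.mp hτ1).2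
  have hτ3 : ContDiff ℝ (⊤:ℕ∞) (deriv (deriv (deriv τ))) := (contDiff_infty_iff_deriv.mp hτ2).2
  funext p
  have hW : HasFDerivAt (Wf δ m)
      (ContinuousLinearMap.pi
        ![0, 0, 0, 0, deriv m (p 0) • P 0, (deriv (deriv m) (p 0) / δ) • P 0]) p := by
    apply hasFDerivAt_pi''
    intro i
    fin_cases i <;>
      simp only [Wf, ContinuousLinearMap.proj_pi, Matrix.cons_val_zero, Matrix.cons_val_one,
        Matrix.head_cons, Matrix.cons_val_two, Matrix.cons_val_three, Matrix.cons_val_four,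
        Matrix.tail_cons, Fin.mk_zero, Fin.mk_one, Matrix.cons_val_fin_one, Matrix.cons_val',
        Matrix.cons_val_succ]
    · exact hasFDerivAt_const _ _
    · exact hasFDerivAt_const _ _
    · exact hasFDerivAt_const _ _
    · exact hasFDerivAt_const _ _
    · exact hcomp0 hm' p
    · have e : (deriv (deriv m) (p 0) / δ) • P 0
          = deriv m (p 0) • (0 : Pt →L[ℝ] ℝ) + δ⁻¹ • deriv (deriv m) (p 0) • P 0 := by
        ext v
        simp
        ring
      rw [e]
      exact (hcomp0 hm1 p).mul (hasFDerivAt_const δ⁻¹ p)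
  have hsq : HasFDerivAt (fun x : Pt => x 1 ^ 2 + σ * x 2 ^ 2)
      ((2 * p 1) • P 1 + (σ * (2 * p 2)) • P 2) p := by
    have h1 : HasFDerivAt (fun x : Pt => x 1 ^ 2) ((2 * p 1) • P 1) p := by
      refine ((hasDerivAt_pow 2 (p 1)).comp_hasFDerivAt (f := fun x : Pt => x 1) p
        (hasFDerivAt_apply 1 p)).congr_fderiv ?_
      ext v; simp
    have h2 : HasFDerivAt (fun x : Pt => x 2 ^ 2) ((2 * p 2) • P 2) p := by
      refine ((hasDerivAt_pow 2 (p 2)).comp_hasFDerivAt (f := fun x : Pt => x 2) p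
        (hasFDerivAt_apply 2 p)).congr_fderiv ?_
      ext v; simp
    refine (h1.add ((hasFDerivAt_const σ p).mul h2)).congr_fderiv ?_
    ext v
    simp
    ring
  have hX : HasFDerivAt (Xf σ δ τ)
      (ContinuousLinearMap.pi
        ![deriv τ (p 0) • P 0,
          (deriv (deriv τ) (p 0) / 2 * p 1) • P 0 + (deriv τ (p 0) / 2) • P 1,
          (deriv (deriv τ) (p 0) / 2 * p 2) • P 0 + (deriv τ (p 0) / 2) • P 2,
          -((deriv (deriv τ) (p 0) * p 3) • P 0 + deriv τ (p 0) • P 3),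
          (deriv (deriv (deriv τ)) (p 0) / 4 * (p 1 ^ 2 + σ * p 2 ^ 2)) • P 0
            + (deriv (deriv τ) (p 0) / 4 * (2 * p 1)) • P 1
            + (deriv (deriv τ) (p 0) / 4 * (σ * (2 * p 2))) • P 2,
          (deriv (deriv (deriv (deriv τ))) (p 0) / (4 * δ) * (p 1 ^ 2 + σ * p 2 ^ 2)
              - deriv (deriv τ) (p 0) * p 5) • P 0
            + (deriv (deriv (deriv τ)) (p 0) / (4 * δ) * (2 * p 1)) • P 1
            + (deriv (deriv (deriv τ)) (p 0) / (4 * δ) * (σ * (2 * p 2))) • P 2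
            - deriv τ (p 0) • P 5]) p := by
    apply hasFDerivAt_pi''
    intro i
    fin_cases i <;>
      simp only [Xf, ContinuousLinearMap.proj_pi, Matrix.cons_val_zero, Matrix.cons_val_one,
        Matrix.head_cons, Matrix.cons_val_two, Matrix.cons_val_three, Matrix.cons_val_four,
        Matrix.tail_cons, Fin.mk_zero, Fin.mk_one, Matrix.cons_val_fin_one, Matrix.cons_val',
        Matrix.cons_val_succ]
    · exact hcomp0 hτ' p
    · exact (((hcomp0 hτ1 p).mul (hasFDerivAt_const (2:ℝ)⁻¹ p)).mul
        (hasFDerivAt_apply 1 p)).congr_fderiv (by ext v; simp; ring)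
    · exact (((hcomp0 hτ1 p).mul (hasFDerivAt_const (2:ℝ)⁻¹ p)).mul
        (hasFDerivAt_apply 2 p)).congr_fderiv (by ext v; simp; ring)
    · exact (((hcomp0 hτ1 p).mul (hasFDerivAt_apply 3 p)).neg).congr_fderiv
        (by ext v; simp; ring)
    · exact (((hcomp0 hτ2 p).mul (hasFDerivAt_const (4:ℝ)⁻¹ p)).mul hsq).congr_fderiv
        (by ext v; simp; ring)
    · exact ((((hcomp0 hτ3 p).mul (hasFDerivAt_const ((4*δ):ℝ)⁻¹ p)).mul hsq).sub
        ((hcomp0 hτ1 p).mul (hasFDerivAt_apply 5 p))).congr_fderiv (by ext v; simp; ring)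
  have hder : deriv (fun s => τ s * deriv m s) (p 0)
      = deriv τ (p 0) * deriv m (p 0) + τ (p 0) * deriv (deriv m) (p 0) :=
    deriv_fun_mul (hτ.differentiable (by simp) (p 0)) (hm1.differentiable (by simp) (p 0))
  funext i
  simp only [bracket, hX.fderiv, hW.fderiv, Pi.sub_apply, ContinuousLinearMap.pi_apply]
  fin_cases i <;>
    simp only [Fin.zero_eta, Fin.mk_one, Fin.reduceFinMk, Xf, Wf, Matrix.cons_val_zero, Matrix.cons_val_one, Matrix.head_cons,
      Matrix.cons_val_two, Matrix.cons_val_three, Matrix.cons_val_four, cons_val_five,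
      Matrix.tail_cons, ContinuousLinearMap.add_apply, ContinuousLinearMap.sub_apply,
      ContinuousLinearMap.neg_apply, ContinuousLinearMap.smul_apply,
      ContinuousLinearMap.proj_apply, ContinuousLinearMap.zero_apply, smul_eq_mul, hder,
      Fin.isValue] <;>
    field_simp <;> ring
end
end

section
/- With X(τ) and Y(g) as defined, [X(τ), Y(g)] = Y(τ g' − (1/2) g τ'). -/
open scoped ContDiff

noncomputable section

/-- Y(g) = g(t)∂ₓ + x g'(t)∂ₛ + (x/δ) g''(t)∂_φ. -/
def Yf (δ : ℝ) (g : ℝ → ℝ) : Pt → Pt := fun p =>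
  ![0, g (p 0), 0, 0, p 1 * deriv g (p 0), p 1 / δ * deriv (deriv g) (p 0)]

set_option maxHeartbeats 1600000 in
/-- [X(τ), Y(g)] = Y(τg' − (1/2)gτ'). -/
theorem stmt_7 (σ δ : ℝ) (hδ : δ ≠ 0) (τ g : ℝ → ℝ)
    (hτ : ContDiff ℝ (⊤ : ℕ∞) τ) (hg : ContDiff ℝ (⊤ : ℕ∞) g) :
    bracket (Xf σ δ τ) (Yf δ g)
      = Yf δ (fun t => τ t * deriv g t - (1/2) * g t * deriv τ t) := by
  have h1i : (∞ : WithTop ℕ∞) ≠ 0 := by simp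
  have hτ0 : ContDiff ℝ ∞ τ := hτ.of_le (by simp)
  have hg0 : ContDiff ℝ ∞ g := hg.of_le (by simp)
  have hτ1 : ContDiff ℝ ∞ (deriv τ) := (contDiff_infty_iff_deriv.mp hτ0).2
  have hτ2 : ContDiff ℝ ∞ (deriv (deriv τ)) := (contDiff_infty_iff_deriv.mp hτ1).2
  have hτ3 : ContDiff ℝ ∞ (deriv (deriv (deriv τ))) := (contDiff_infty_iff_deriv.mp hτ2).2
  have hg1 : ContDiff ℝ ∞ (deriv g) := (contDiff_infty_iff_deriv.mp hg0).2
  have hg2 : ContDiff ℝ ∞ (deriv (deriv g)) := (contDiff_infty_iff_deriv.mp hg1).2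
  have Dτ : ∀ t, HasDerivAt τ (deriv τ t) t := fun t => (hτ0.differentiable h1i t).hasDerivAt
  have Dτ1 : ∀ t, HasDerivAt (deriv τ) (deriv (deriv τ) t) t :=
    fun t => (hτ1.differentiable h1i t).hasDerivAt
  have Dτ2 : ∀ t, HasDerivAt (deriv (deriv τ)) (deriv (deriv (deriv τ)) t) t :=
    fun t => (hτ2.differentiable h1i t).hasDerivAt
  have Dτ3 : ∀ t, HasDerivAt (deriv (deriv (deriv τ))) (deriv (deriv (deriv (deriv τ))) t) t :=
    fun t => (hτ3.differentiable h1i t).hasDerivAt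
  have Dg : ∀ t, HasDerivAt g (deriv g t) t := fun t => (hg0.differentiable h1i t).hasDerivAt
  have Dg1 : ∀ t, HasDerivAt (deriv g) (deriv (deriv g) t) t :=
    fun t => (hg1.differentiable h1i t).hasDerivAt
  have Dg2 : ∀ t, HasDerivAt (deriv (deriv g)) (deriv (deriv (deriv g)) t) t :=
    fun t => (hg2.differentiable h1i t).hasDerivAt
  -- derivatives of h := τ g' - (1/2) g τ'
  set h : ℝ → ℝ := fun t => τ t * deriv g t - 1/2 * g t * deriv τ t with hh
  have Dh : ∀ t, HasDerivAt h
      (1/2 * deriv τ t * deriv g t + τ t * deriv (deriv g) t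
        - 1/2 * g t * deriv (deriv τ) t) t := by
    intro t
    have := ((Dτ t).mul (Dg1 t)).sub (((Dg t).const_mul (1/2)).mul (Dτ1 t))
    exact this.congr_deriv (by ring)
  have dh : deriv h = fun t => 1/2 * deriv τ t * deriv g t + τ t * deriv (deriv g) t
      - 1/2 * g t * deriv (deriv τ) t :=
    funext fun t => (Dh t).deriv
  have Dh2 : ∀ t, HasDerivAt (deriv h)
      (3/2 * deriv τ t * deriv (deriv g) t + τ t * deriv (deriv (deriv g)) t
        - 1/2 * g t * deriv (deriv (deriv τ)) t) t := by
    intro t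
    rw [dh]
    have := ((((Dτ1 t).const_mul (1/2)).mul (Dg1 t)).add ((Dτ t).mul (Dg2 t))).sub
      (((Dg t).const_mul (1/2)).mul (Dτ2 t))
    exact this.congr_deriv (by ring)
  have dh2 : deriv (deriv h) = fun t =>
      3/2 * deriv τ t * deriv (deriv g) t + τ t * deriv (deriv (deriv g)) t
        - 1/2 * g t * deriv (deriv (deriv τ)) t :=
    funext fun t => (Dh2 t).deriv
  funext p
  have hp : ∀ j : Fin 6, HasFDerivAt (fun q : Pt => q j)
      (ContinuousLinearMap.proj j : Pt →L[ℝ] ℝ) p := fun j => hasFDerivAt_apply j p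
  -- fderiv of each needed scalar component (explicit function, inferred CLM)
  have fA0 : fderiv ℝ (fun _ : Pt => (0:ℝ)) p = _ := (hasFDerivAt_const (0:ℝ) p).fderiv
  have fA1 : fderiv ℝ (fun q : Pt => g (q 0)) p = _ :=
    (HasDerivAt.comp_hasFDerivAt p (Dg (p 0)) (hp 0)).fderiv
  have fA4 : fderiv ℝ (fun q : Pt => q 1 * deriv g (q 0)) p = _ :=
    ((hp 1).mul (HasDerivAt.comp_hasFDerivAt p (Dg1 (p 0)) (hp 0) :)).fderiv
  have fA5 : fderiv ℝ (fun q : Pt => q 1 / δ * deriv (deriv g) (q 0)) p = _ :=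
    ((HasDerivAt.comp_hasFDerivAt p ((hasDerivAt_id (p 1)).div_const δ) (hp 1) :).mul
      (HasDerivAt.comp_hasFDerivAt p (Dg2 (p 0)) (hp 0) :)).fderiv
  have fB0 : fderiv ℝ (fun q : Pt => τ (q 0)) p = _ :=
    (HasDerivAt.comp_hasFDerivAt p (Dτ (p 0)) (hp 0)).fderiv
  have fB1 : fderiv ℝ (fun q : Pt => deriv τ (q 0) / 2 * q 1) p = _ :=
    ((HasDerivAt.comp_hasFDerivAt p ((Dτ1 (p 0)).div_const 2) (hp 0) :).mul (hp 1)).fderiv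
  have fB2 : fderiv ℝ (fun q : Pt => deriv τ (q 0) / 2 * q 2) p = _ :=
    ((HasDerivAt.comp_hasFDerivAt p ((Dτ1 (p 0)).div_const 2) (hp 0) :).mul (hp 2)).fderiv
  have fB3 : fderiv ℝ (fun q : Pt => -(deriv τ (q 0) * q 3)) p = _ :=
    (((HasDerivAt.comp_hasFDerivAt p (Dτ1 (p 0)) (hp 0) :).mul (hp 3)).neg).fderiv
  have hQ := (HasDerivAt.comp_hasFDerivAt p (hasDerivAt_pow 2 (p 1)) (hp 1) :).add
    ((HasDerivAt.comp_hasFDerivAt p (hasDerivAt_pow 2 (p 2)) (hp 2) :).const_mul σ)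
  have fB4 : fderiv ℝ (fun q : Pt =>
      deriv (deriv τ) (q 0) / 4 * (q 1 ^ 2 + σ * q 2 ^ 2)) p = _ :=
    ((HasDerivAt.comp_hasFDerivAt p ((Dτ2 (p 0)).div_const 4) (hp 0) :).mul hQ).fderiv
  have fB5 : fderiv ℝ (fun q : Pt =>
      deriv (deriv (deriv τ)) (q 0) / (4 * δ) * (q 1 ^ 2 + σ * q 2 ^ 2)
        - deriv τ (q 0) * q 5) p = _ :=
    (((HasDerivAt.comp_hasFDerivAt p ((Dτ3 (p 0)).div_const (4 * δ)) (hp 0) :).mul hQ).sub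
      ((HasDerivAt.comp_hasFDerivAt p (Dτ1 (p 0)) (hp 0) :).mul (hp 5))).fderiv
  -- decompose the fderiv of the vector fields into components
  have hYdiff : ∀ j : Fin 6, DifferentiableAt ℝ (fun q => Yf δ g q j) p := by
    intro j
    fin_cases j
    · exact (hasFDerivAt_const (0:ℝ) p).differentiableAt
    · exact (HasDerivAt.comp_hasFDerivAt p (Dg (p 0)) (hp 0)).differentiableAt
    · exact (hasFDerivAt_const (0:ℝ) p).differentiableAt
    · exact (hasFDerivAt_const (0:ℝ) p).differentiableAt
    · exact ((hp 1).mul (HasDerivAt.comp_hasFDerivAt p (Dg1 (p 0)) (hp 0) :)).differentiableAt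
    · exact ((HasDerivAt.comp_hasFDerivAt p ((hasDerivAt_id (p 1)).div_const δ) (hp 1) :).mul
        (HasDerivAt.comp_hasFDerivAt p (Dg2 (p 0)) (hp 0) :)).differentiableAt
  have hXdiff : ∀ j : Fin 6, DifferentiableAt ℝ (fun q => Xf σ δ τ q j) p := by
    intro j
    fin_cases j
    · exact (HasDerivAt.comp_hasFDerivAt p (Dτ (p 0)) (hp 0)).differentiableAt
    · exact ((HasDerivAt.comp_hasFDerivAt p ((Dτ1 (p 0)).div_const 2) (hp 0) :).mul
        (hp 1)).differentiableAt
    · exact ((HasDerivAt.comp_hasFDerivAt p ((Dτ1 (p 0)).div_const 2) (hp 0) :).mul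
        (hp 2)).differentiableAt
    · exact (((HasDerivAt.comp_hasFDerivAt p (Dτ1 (p 0)) (hp 0) :).mul (hp 3)).neg).differentiableAt
    · exact ((HasDerivAt.comp_hasFDerivAt p ((Dτ2 (p 0)).div_const 4) (hp 0) :).mul
        hQ).differentiableAt
    · exact (((HasDerivAt.comp_hasFDerivAt p ((Dτ3 (p 0)).div_const (4 * δ)) (hp 0) :).mul hQ).sub
        ((HasDerivAt.comp_hasFDerivAt p (Dτ1 (p 0)) (hp 0) :).mul (hp 5))).differentiableAt
  have hfY : fderiv ℝ (Yf δ g) p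
      = ContinuousLinearMap.pi (fun j => fderiv ℝ (fun q => Yf δ g q j) p) :=
    fderiv_pi hYdiff
  have hfX : fderiv ℝ (Xf σ δ τ) p
      = ContinuousLinearMap.pi (fun j => fderiv ℝ (fun q => Xf σ δ τ q j) p) :=
    fderiv_pi hXdiff
  funext i
  rw [bracket]
  simp only [Pi.sub_apply, hfY, hfX, ContinuousLinearMap.pi_apply]
  fin_cases i
  · show fderiv ℝ (fun _ : Pt => (0:ℝ)) p (Xf σ δ τ p)
      - fderiv ℝ (fun q : Pt => τ (q 0)) p (Yf δ g p) = _
    rw [fA0, fB0]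
    simp [Xf, Yf]
  · show fderiv ℝ (fun q : Pt => g (q 0)) p (Xf σ δ τ p)
      - fderiv ℝ (fun q : Pt => deriv τ (q 0) / 2 * q 1) p (Yf δ g p) = _
    rw [fA1, fB1]
    simp [Xf, Yf, hh]
    ring
  · show fderiv ℝ (fun _ : Pt => (0:ℝ)) p (Xf σ δ τ p)
      - fderiv ℝ (fun q : Pt => deriv τ (q 0) / 2 * q 2) p (Yf δ g p) = _
    rw [fA0, fB2]
    simp [Xf, Yf]
  · show fderiv ℝ (fun _ : Pt => (0:ℝ)) p (Xf σ δ τ p)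
      - fderiv ℝ (fun q : Pt => -(deriv τ (q 0) * q 3)) p (Yf δ g p) = _
    rw [fA0, fB3]
    simp [Xf, Yf]
  · show fderiv ℝ (fun q : Pt => q 1 * deriv g (q 0)) p (Xf σ δ τ p)
      - fderiv ℝ (fun q : Pt =>
          deriv (deriv τ) (q 0) / 4 * (q 1 ^ 2 + σ * q 2 ^ 2)) p (Yf δ g p) = _
    rw [fA4, fB4]
    simp [Xf, Yf, dh]
    ring
  · show fderiv ℝ (fun q : Pt => q 1 / δ * deriv (deriv g) (q 0)) p (Xf σ δ τ p)
      - fderiv ℝ (fun q : Pt =>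
          deriv (deriv (deriv τ)) (q 0) / (4 * δ) * (q 1 ^ 2 + σ * q 2 ^ 2)
            - deriv τ (q 0) * q 5) p (Yf δ g p) = _
    rw [fA5, fB5]
    have m5 : ∀ (a0 a1 a2 a3 a4 a5 : ℝ), (![a0,a1,a2,a3,a4,a5] : Fin 6 → ℝ) 5 = a5 :=
      fun _ _ _ _ _ _ => rfl
    simp [Xf, Yf, dh2, m5]
    field_simp
    ring
end
end
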